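/- arXiv:1611.01907 — 2 statements merged into one kernel-verified Lean document; each statement's English description precedes it below -/
import Mathlib

section
/- For a Paillier modulus n = p·q with p, q distinct primes, the map ε: Z_n × Z_n* → Z_{n²}* given by ε(m, r) = (1+n)^m · r^n mod n² satisfies ε(m1, r1) · ε(m2, r2) = ε(m1 + m2 mod n, r1·r2 mod n) in Z_{n²}*. -/
/-- In `ZMod (n^2)`, if `c^2 = 0` and `n*c = 0` then `(x+c)^n = x^n`. -/
lemma paillier_aux (n : ℕ) (x c : ZMod (n ^ 2)) (hc : c ^ 2 = 0)
    (hnc : (n : ZMod (n ^ 2)) * c = 0) : (x + c) ^ n = x ^ n := by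
  rw [add_pow]
  rw [Finset.sum_eq_single n]
  · simp
  · intro b hb hbn
    have hb' : b < n := by
      have := Finset.mem_range.mp hb; omega
    rcases (by omega : n - b = 1 ∨ 2 ≤ n - b) with h1 | h2
    · have hch : n.choose b = n := by
        have hb1 : b = n - 1 := by omega
        have h1' : 1 ≤ n := by omega
        rw [hb1, Nat.choose_symm h1', Nat.choose_one_right]
      rw [h1, pow_one, hch]
      calc x ^ b * c * (n : ZMod (n ^ 2)) = x ^ b * ((n : ZMod (n ^ 2)) * c) := by ring
        _ = 0 := by rw [hnc]; ring
    · obtain ⟨k, hk⟩ := Nat.exists_eq_add_of_le h2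
      rw [hk, pow_add, hc]
      ring
  · intro h
    exact absurd (Finset.self_mem_range_succ n) h

/-- Additive homomorphism of the Paillier encryption map
ε(m, r) = (1+n)^m · r^n in Z_{n²}. -/
theorem paillier_additive_homomorphism
    {p q : ℕ} (hp : p.Prime) (hq : q.Prime) (hpq : p ≠ q)
    (n : ℕ) (hn : n = p * q)
    (m₁ m₂ : ZMod n) (r₁ r₂ : ZMod n) :
    (((1 + n : ZMod (n ^ 2)) ^ m₁.val * ((r₁.val : ZMod (n ^ 2))) ^ n) *
      ((1 + n : ZMod (n ^ 2)) ^ m₂.val * ((r₂.val : ZMod (n ^ 2))) ^ n)) =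
    (1 + n : ZMod (n ^ 2)) ^ (m₁ + m₂).val * (((r₁ * r₂).val : ZMod (n ^ 2))) ^ n := by
  have hn0 : n ≠ 0 := by
    rw [hn]; exact Nat.mul_ne_zero hp.ne_zero hq.ne_zero
  haveI : NeZero n := ⟨hn0⟩
  have hnn : ((n : ZMod (n ^ 2))) ^ 2 = 0 := by
    rw [← Nat.cast_pow, ZMod.natCast_self]
  have h1n : ((1 : ZMod (n ^ 2)) + n) ^ n = 1 := by
    have := paillier_aux n 1 (n : ZMod (n ^ 2)) hnn (by rw [← sq, hnn])
    simpa using this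
  have key : ∀ a : ℕ, ((1 : ZMod (n ^ 2)) + n) ^ a = (1 + (n : ZMod (n ^ 2))) ^ (a % n) := by
    intro a
    conv_lhs => rw [← Nat.mod_add_div a n]
    rw [pow_add, pow_mul, h1n, one_pow, mul_one]
  have keyr : ∀ a : ℕ, ((a : ZMod (n ^ 2))) ^ n = (((a % n : ℕ) : ZMod (n ^ 2))) ^ n := by
    intro a
    conv_lhs => rw [← Nat.mod_add_div a n]
    push_cast
    rw [paillier_aux n _ ((n : ZMod (n ^ 2)) * (a / n : ℕ))
      (by rw [mul_pow, hnn, zero_mul]) (by rw [← mul_assoc, ← sq, hnn, zero_mul])]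
  have hlhs : (((1 + n : ZMod (n ^ 2)) ^ m₁.val * ((r₁.val : ZMod (n ^ 2))) ^ n) *
      ((1 + n : ZMod (n ^ 2)) ^ m₂.val * ((r₂.val : ZMod (n ^ 2))) ^ n)) =
      (1 + (n : ZMod (n ^ 2))) ^ (m₁.val + m₂.val) *
        (((r₁.val * r₂.val : ℕ) : ZMod (n ^ 2))) ^ n := by
    rw [pow_add, Nat.cast_mul, mul_pow]; ring
  rw [hlhs, key (m₁.val + m₂.val), keyr (r₁.val * r₂.val),
    ZMod.val_add, ZMod.val_mul]
end

section
/- The PageRank equation has a unique fixed point: for a column-stochastic n×n matrix M and damping factor 0 ≤ d < 1, there exists exactly one vector Pr with Pr = (1-d)/n · 1 + d·M·Pr, where 1 is the all-ones vector. -/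
lemma pagerank_aux {n : ℕ} (M : Matrix (Fin n) (Fin n) ℝ)
    (hMnonneg : ∀ i j, 0 ≤ M i j) (hMcol : ∀ j, ∑ i, M i j = 1)
    {d : ℝ} (hd0 : 0 ≤ d) (hd1 : d < 1)
    (x : Fin n → ℝ) (hx : ∀ i, x i = d * (M.mulVec x) i) : x = 0 := by
  have hS : ∑ i, |x i| ≤ d * ∑ i, |x i| := by
    calc ∑ i, |x i| = ∑ i, |d * (M.mulVec x) i| := Finset.sum_congr rfl fun i _ => by rw [hx i]
      _ ≤ ∑ i, d * ∑ j, M i j * |x j| := by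
          apply Finset.sum_le_sum
          intro i _
          rw [abs_mul, abs_of_nonneg hd0]
          apply mul_le_mul_of_nonneg_left _ hd0
          have hmv : (M.mulVec x) i = ∑ j, M i j * x j := by
            simp [Matrix.mulVec, dotProduct]
          rw [hmv]
          calc |∑ j, M i j * x j| ≤ ∑ j, |M i j * x j| := Finset.abs_sum_le_sum_abs _ _
            _ = ∑ j, M i j * |x j| := by
                refine Finset.sum_congr rfl fun j _ => ?_
                rw [abs_mul, abs_of_nonneg (hMnonneg i j)]
      _ = d * ∑ j, (∑ i, M i j) * |x j| := by
          simp only [Finset.mul_sum, Finset.sum_mul, mul_assoc]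
          exact Finset.sum_comm
      _ = d * ∑ j, |x j| := by
          refine congrArg _ (Finset.sum_congr rfl fun j _ => ?_)
          rw [hMcol j, one_mul]
  have hS0 : 0 ≤ ∑ i, |x i| := Finset.sum_nonneg fun i _ => abs_nonneg _
  have hSz : ∑ i, |x i| = 0 := by nlinarith
  funext i
  have := (Finset.sum_eq_zero_iff_of_nonneg (fun i _ => abs_nonneg (x i))).mp hSz i
    (Finset.mem_univ i)
  simpa [abs_eq_zero] using this

/-- The PageRank equation has a unique fixed point. -/
theorem pagerank_unique_fixed_point {n : ℕ} (hn : 1 ≤ n)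
    (M : Matrix (Fin n) (Fin n) ℝ)
    (hMnonneg : ∀ i j, 0 ≤ M i j)
    (hMcol : ∀ j, ∑ i, M i j = 1)
    (d : ℝ) (hd0 : 0 ≤ d) (hd1 : d < 1) :
    ∃! Pr : Fin n → ℝ, ∀ i, Pr i = (1 - d) / n + d * (M.mulVec Pr) i := by
  set L : (Fin n → ℝ) →ₗ[ℝ] (Fin n → ℝ) := LinearMap.id - d • M.mulVecLin with hL
  have hLapply : ∀ x i, L x i = x i - d * (M.mulVec x) i := by
    intro x i
    simp [hL, Matrix.mulVecLin]
  have hinj : Function.Injective L := by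
    rw [injective_iff_map_eq_zero]
    intro x hx0
    apply pagerank_aux M hMnonneg hMcol hd0 hd1
    intro i
    have := congrFun hx0 i
    rw [hLapply] at this
    simp only [Pi.zero_apply] at this
    linarith
  have hsurj : Function.Surjective L := (LinearMap.injective_iff_surjective).mp hinj
  obtain ⟨Pr, hPr⟩ := hsurj (fun _ => (1 - d) / n)
  refine ⟨Pr, ?_, ?_⟩
  · intro i
    have := congrFun hPr i
    rw [hLapply] at this
    linarith
  · intro y hy
    apply sub_eq_zero.mp
    have : (fun i => y i - Pr i) = 0 := by
      apply pagerank_aux M hMnonneg hMcol hd0 hd1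
      intro i
      have h1 := hy i
      have h2 : Pr i = (1 - d) / n + d * (M.mulVec Pr) i := by
        have := congrFun hPr i
        rw [hLapply] at this
        linarith
      have h3 : (M.mulVec fun i => y i - Pr i) i = (M.mulVec y) i - (M.mulVec Pr) i := by
        simp [Matrix.mulVec, dotProduct, mul_sub, Finset.sum_sub_distrib]
      rw [h3]; linarith
    funext i
    exact congrFun this i
end
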